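/- Let ε > 0 be such that 1/ε is a positive integer. For every OOEBP instance I with item sizes in (0,1] and every feasible packing of I using m bins, there exists a feasible packing of I using at most (1+ε²)·m + 1 bins in which every exceeding item has size at least ε². -/

import Mathlib

/-!
Take the exceeding items of size below `ε² = 1/k²` out of their bins. Each of them was the last
item of its bin, so the bin it leaves now has load equal to its load before that item arrived,
which is below `1`: it no longer has an exceeding item, and no other bin changes. The removed
items, at most one per bin, are packed `k²` at a time into fresh bins, whose loads stay below
`k² · ε² = 1`; this costs at most `m / k² + 1 = ε² m + 1` new bins.
-/

open scoped BigOperators Classical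

namespace OOEBP

noncomputable section

/-- Load of bin `b` under packing `p` of instance `s`. -/
def binLoad (s : List ℝ) (p : ℕ → ℕ) (b : ℕ) : ℝ :=
  ∑ j ∈ Finset.range s.length, if p j = b then s.getD j 0 else 0

/-- A packing is feasible if each item is placed into a bin whose current
load (total size of earlier items in the same bin) is strictly below 1. -/
def Feasible (s : List ℝ) (p : ℕ → ℕ) : Prop :=
  ∀ i < s.length,
    (∑ j ∈ Finset.range i, if p j = p i then s.getD j 0 else 0) < 1

/-- The cost of a packing: the number of nonempty bins. -/
def cost (s : List ℝ) (p : ℕ → ℕ) : ℕ :=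
  ((Finset.range s.length).image p).card

/-- Optimal cost of a feasible packing of `s`. -/
def OPT (s : List ℝ) : ℕ :=
  sInf {m | ∃ p, Feasible s p ∧ cost s p = m}

/-- Item `i` is the exceeding item of its bin: the bin's total size is at
least 1 and `i` is the item of maximum index in its bin. -/
def IsExceeding (s : List ℝ) (p : ℕ → ℕ) (i : ℕ) : Prop :=
  i < s.length ∧ 1 ≤ binLoad s p (p i) ∧
    ∀ j, i < j → j < s.length → p j ≠ p i

open Finset

theorem exists_map_card_fiber_le {α : Type*} [LinearOrder α] (E : Finset α) {g : ℕ} (hg : 0 < g) :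
    ∃ f : α → ℕ, (∀ t, #(E.filter (f · = t)) ≤ g) ∧ #(E.image f) ≤ #E / g + 1 := by
  set l := E.sort (· ≤ ·)
  have hmem : ∀ {a}, a ∈ E → a ∈ l := fun ha => (mem_sort _).mpr ha
  refine ⟨fun a => l.idxOf a / g, fun t => ?_, ?_⟩
  · have hinj : Set.InjOn (fun a => l.idxOf a % g) (E.filter (fun a => l.idxOf a / g = t)) := by
      intro a ha b hb hab
      simp only [coe_filter, Set.mem_ofPred_eq] at ha hb
      refine (List.idxOf_inj (hmem ha.1)).mp ?_
      rw [← Nat.div_add_mod (l.idxOf a) g, ← Nat.div_add_mod (l.idxOf b) g, ha.2, hb.2]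
      exact congrArg _ hab
    simpa using card_le_card_of_injOn _ (fun a _ => mem_range.mpr (Nat.mod_lt _ hg)) hinj
  · calc #(E.image fun a => l.idxOf a / g) ≤ #(range (#E / g + 1)) := by
          refine card_le_card (image_subset_iff.mpr fun a ha => mem_range.mpr ?_)
          have : l.idxOf a < #E := by
            simpa [l] using List.idxOf_lt_length_iff.mpr (hmem ha)
          exact Nat.lt_succ_of_le (Nat.div_le_div_right this.le)
      _ = #E / g + 1 := card_range _

theorem sum_lt_one_of_card_le {α : Type*} {T : Finset α} {x : α → ℝ} {g : ℕ} {δ : ℝ}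
    (hT : #T ≤ g) (hx : ∀ j ∈ T, x j < δ) (hgδ : g * δ ≤ 1) : ∑ j ∈ T, x j < 1 := by
  rcases T.eq_empty_or_nonempty with rfl | hne
  · simp
  calc ∑ j ∈ T, x j < ∑ _j ∈ T, δ := sum_lt_sum_of_nonempty hne hx
    _ = #T * δ := by rw [sum_const, nsmul_eq_mul]
    _ ≤ 1 := by
      rcases le_total 0 δ with hδ | hδ
      · exact (mul_le_mul_of_nonneg_right (by exact_mod_cast hT) hδ).trans hgδ
      · exact (mul_nonpos_of_nonneg_of_nonpos (Nat.cast_nonneg _) hδ).trans zero_le_one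

def IsLast (s : List ℝ) (p : ℕ → ℕ) (i : ℕ) : Prop :=
  i < s.length ∧ ∀ j, i < j → j < s.length → p j ≠ p i

theorem IsExceeding.isLast {s : List ℝ} {p : ℕ → ℕ} {i : ℕ} (h : IsExceeding s p i) :
    IsLast s p i :=
  ⟨h.1, h.2.2⟩

theorem card_le_cost_of_isLast {s : List ℝ} {p : ℕ → ℕ} {E : Finset ℕ}
    (hE : ∀ e ∈ E, IsLast s p e) : #E ≤ cost s p := by
  refine card_le_card_of_injOn p (fun e he => mem_image_of_mem p (mem_range.mpr (hE e he).1)) ?_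
  intro a ha b hb hab
  by_contra hne
  rcases lt_or_gt_of_ne hne with h | h
  · exact (hE a ha).2 b h (hE b hb).1 hab.symm
  · exact (hE b hb).2 a h (hE a ha).1 hab

def relocate (s : List ℝ) (p : ℕ → ℕ) (E : Finset ℕ) (f : ℕ → ℕ) (i : ℕ) : ℕ :=
  if i ∈ E then (range s.length).sup p + 1 + f i else p i

section Relocate

variable {s : List ℝ} {p : ℕ → ℕ} {E : Finset ℕ} {f : ℕ → ℕ} {i j : ℕ}

theorem relocate_eq_relocate_iff_of_not_mem (hi : i ∉ E) (hin : i < s.length) :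
    relocate s p E f j = relocate s p E f i ↔ p j = p i ∧ j ∉ E := by
  have hpi : p i < (range s.length).sup p + 1 := Nat.lt_succ_of_le (le_sup (mem_range.mpr hin))
  by_cases hj : j ∈ E
  · simp only [relocate, hi, hj, if_true, if_false, not_true, and_false, iff_false]
    omega
  · simp [relocate, hi, hj]

theorem relocate_eq_relocate_iff_of_mem (hi : i ∈ E) (hjn : j < s.length) :
    relocate s p E f j = relocate s p E f i ↔ j ∈ E ∧ f j = f i := by
  by_cases hj : j ∈ E
  · simp [relocate, hi, hj]
  · rw [eq_comm, relocate_eq_relocate_iff_of_not_mem hj hjn]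
    simp [hi, hj]

variable {g : ℕ} {δ : ℝ}

theorem sum_relocate_bin_lt_one (hEsmall : ∀ e ∈ E, s.getD e 0 < δ)
    (hf : ∀ t, #(E.filter (f · = t)) ≤ g) (hgδ : g * δ ≤ 1) (hi : i ∈ E) {T : Finset ℕ}
    (hT : T ⊆ range s.length) :
    (∑ j ∈ T, if relocate s p E f j = relocate s p E f i then s.getD j 0 else 0) < 1 := by
  rw [← sum_filter]
  have hsub : T.filter (relocate s p E f · = relocate s p E f i) ⊆ E.filter (f · = f i) := by
    intro j hj
    rw [mem_filter] at hj ⊢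
    exact (relocate_eq_relocate_iff_of_mem hi (mem_range.mp (hT hj.1))).mp hj.2
  exact sum_lt_one_of_card_le ((card_le_card hsub).trans (hf _))
    (fun j hj => hEsmall j (mem_filter.mp (hsub hj)).1) hgδ

theorem feasible_relocate (hp : Feasible s p) (hElast : ∀ e ∈ E, IsLast s p e)
    (hEsmall : ∀ e ∈ E, s.getD e 0 < δ) (hf : ∀ t, #(E.filter (f · = t)) ≤ g)
    (hgδ : g * δ ≤ 1) : Feasible s (relocate s p E f) := by
  intro i hin
  by_cases hi : i ∈ E
  · exact sum_relocate_bin_lt_one hEsmall hf hgδ hi (range_subset_range.mpr hin.le)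
  · convert hp i hin using 1
    refine sum_congr rfl fun j hj => ?_
    have hsame : relocate s p E f j = relocate s p E f i ↔ p j = p i := by
      rw [relocate_eq_relocate_iff_of_not_mem hi hin, and_iff_left_iff_imp]
      exact fun hpj hj' => (hElast j hj').2 i (mem_range.mp hj) hin hpj.symm
    simp only [hsame]

theorem binLoad_relocate_lt_one_of_mem_bin (hp : Feasible s p)
    (hElast : ∀ e ∈ E, IsLast s p e) (hi : i ∉ E) (hin : i < s.length) {e : ℕ} (he : e ∈ E)
    (hpe : p e = p i) : binLoad s (relocate s p E f) (relocate s p E f i) < 1 := by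
  have hen := (hElast e he).1
  convert hp e hen using 1
  rw [binLoad, ← sum_filter, ← sum_filter]
  refine sum_congr (Finset.ext fun j => ?_) fun _ _ => rfl
  simp only [mem_filter, mem_range, relocate_eq_relocate_iff_of_not_mem hi hin, hpe]
  constructor
  · rintro ⟨hjn, hpj, hj⟩
    refine ⟨lt_of_le_of_ne ?_ (fun h => hj (h ▸ he)), hpj⟩
    exact not_lt.mp fun hej => (hElast e he).2 j hej hjn (hpj.trans hpe.symm)
  · rintro ⟨hje, hpj⟩
    exact ⟨hje.trans hen, hpj, fun hj => (hElast j hj).2 e hje hen (hpe.trans hpj.symm)⟩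

theorem isExceeding_of_isExceeding_relocate (hi : i ∉ E) (hbin : ∀ e ∈ E, p e ≠ p i)
    (h : IsExceeding s (relocate s p E f) i) : IsExceeding s p i := by
  obtain ⟨hin, hload, hlast⟩ := h
  have hsame : ∀ j, relocate s p E f j = relocate s p E f i ↔ p j = p i := fun j => by
    rw [relocate_eq_relocate_iff_of_not_mem hi hin, and_iff_left_iff_imp]
    exact fun hpj hj => hbin j hj hpj
  refine ⟨hin, ?_, fun j hij hjn hpj => hlast j hij hjn ((hsame j).mpr hpj)⟩
  simpa only [binLoad, hsame] using hload

theorem le_of_isExceeding_relocate (hp : Feasible s p) (hElast : ∀ e ∈ E, IsLast s p e)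
    (hEsmall : ∀ e ∈ E, s.getD e 0 < δ) (hf : ∀ t, #(E.filter (f · = t)) ≤ g)
    (hgδ : g * δ ≤ 1) (hEbig : ∀ i, IsExceeding s p i → s.getD i 0 < δ → i ∈ E)
    (h : IsExceeding s (relocate s p E f) i) : δ ≤ s.getD i 0 := by
  by_contra! hsmall
  by_cases hi : i ∈ E
  · exact (sum_relocate_bin_lt_one hEsmall hf hgδ hi subset_rfl).not_ge h.2.1
  by_cases hbin : ∀ e ∈ E, p e ≠ p i
  · exact hi (hEbig i (isExceeding_of_isExceeding_relocate hi hbin h) hsmall)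
  push Not at hbin
  obtain ⟨e, he, hpe⟩ := hbin
  exact (binLoad_relocate_lt_one_of_mem_bin hp hElast hi h.1 he hpe).not_ge h.2.1

theorem cost_relocate_le : cost s (relocate s p E f) ≤ cost s p + #(E.image f) := by
  calc cost s (relocate s p E f)
      ≤ #((range s.length).image p ∪ (E.image f).image ((range s.length).sup p + 1 + ·)) := by
        refine card_le_card (image_subset_iff.mpr fun i hi => ?_)
        by_cases hiE : i ∈ E
        · simp only [relocate, hiE, if_true]
          exact mem_union_right _ (mem_image_of_mem _ (mem_image_of_mem f hiE))
        · simp only [relocate, hiE, if_false]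
          exact mem_union_left _ (mem_image_of_mem p hi)
    _ ≤ cost s p + #(E.image f) := (card_union_le _ _).trans (Nat.add_le_add_left card_image_le _)

end Relocate

theorem exists_feasible_exceeding_ge {s : List ℝ} {p : ℕ → ℕ} (hp : Feasible s p) {g : ℕ}
    (hg : 0 < g) {δ : ℝ} (hgδ : g * δ ≤ 1) :
    ∃ q, Feasible s q ∧ (∀ i, IsExceeding s q i → δ ≤ s.getD i 0) ∧
      cost s q ≤ cost s p + cost s p / g + 1 := by
  set E := (range s.length).filter fun i => IsExceeding s p i ∧ s.getD i 0 < δ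
  have hElast : ∀ e ∈ E, IsLast s p e := fun e he => (mem_filter.mp he).2.1.isLast
  have hEsmall : ∀ e ∈ E, s.getD e 0 < δ := fun e he => (mem_filter.mp he).2.2
  have hEbig : ∀ i, IsExceeding s p i → s.getD i 0 < δ → i ∈ E :=
    fun i hi hsmall => mem_filter.mpr ⟨mem_range.mpr hi.1, hi, hsmall⟩
  obtain ⟨f, hf, hfcard⟩ := exists_map_card_fiber_le E hg
  refine ⟨relocate s p E f, feasible_relocate hp hElast hEsmall hf hgδ,
    fun i => le_of_isExceeding_relocate hp hElast hEsmall hf hgδ hEbig, ?_⟩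
  calc cost s (relocate s p E f) ≤ cost s p + (#E / g + 1) := cost_relocate_le.trans (by omega)
    _ ≤ cost s p + (cost s p / g + 1) := by
      gcongr
      exact card_le_cost_of_isLast hElast
    _ = cost s p + cost s p / g + 1 := by ring

theorem stmt0 (ε : ℝ) (k : ℕ) (hk : 1 ≤ k) (hεk : ε = 1 / k)
    (s : List ℝ)
    (p : ℕ → ℕ) (hp : Feasible s p) (m : ℕ) (hm : cost s p = m) :
    ∃ q : ℕ → ℕ, Feasible s q ∧
      (∀ i, IsExceeding s q i → ε ^ 2 ≤ s.getD i 0) ∧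
      (cost s q : ℝ) ≤ (1 + ε ^ 2) * m + 1 := by
  have hk0 : (k : ℝ) ≠ 0 := Nat.cast_ne_zero.mpr (by omega)
  have hε2 : ε ^ 2 = 1 / ((k ^ 2 : ℕ) : ℝ) := by rw [hεk]; push_cast; ring
  have hgδ : ((k ^ 2 : ℕ) : ℝ) * ε ^ 2 = 1 := by rw [hε2]; field_simp
  obtain ⟨q, hq, hexc, hcost⟩ := exists_feasible_exceeding_ge hp (pow_pos hk 2) hgδ.le
  refine ⟨q, hq, hexc, ?_⟩
  calc (cost s q : ℝ) ≤ m + ((m / k ^ 2 : ℕ) : ℝ) + 1 := by rw [← hm]; exact_mod_cast hcost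
    _ ≤ m + m / ((k ^ 2 : ℕ) : ℝ) + 1 := by gcongr; exact Nat.cast_div_le
    _ = (1 + ε ^ 2) * m + 1 := by rw [hε2]; ring

end

end OOEBP
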